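/- arXiv:2602.10273 — 2 statements merged into one kernel-verified Lean document; each statement's English description precedes it below -/
import Mathlib

section
/- Token-level temperature does not equal the sequence-level power distribution: there exist a finite alphabet, horizon T = 2, and an autoregressive model p(y_1, y_2) = p_1(y_1)·p_2(y_2|y_1) and α > 1 such that the joint distribution q(y_1,y_2) = q_1(y_1)·q_2(y_2|y_1), where each q_t ∝ p_t^α, differs from the normalized distribution π_α(y_1,y_2) ∝ p(y_1,y_2)^α. -/
/-!
Summing the power distribution over the second token shows that its first-token marginal is
proportional to `p₁(a)^α · ∑_b p₂(b | a)^α`: the prefix `a` is reweighted by how concentrated its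
continuation is, which per-token tempering ignores. Hence the two can only agree if
`∑_b p₂(b | a)^α` does not depend on `a`, and a model with one uniform and one deterministic
conditional violates this.
-/

open Finset

theorem sum_rpow_eq_of_tokenwise_eq_power {ι κ : Type*} [Fintype ι] [Fintype κ]
    {p₁ : ι → ℝ} {p₂ : ι → κ → ℝ} {α : ℝ}
    (hp₁ : ∀ a, 0 ≤ p₁ a) (hp₂ : ∀ a b, 0 ≤ p₂ a b) (hZ₂ : ∀ a, ∑ b, p₂ a b ^ α ≠ 0)
    (h : ∀ a b, (p₁ a ^ α / ∑ a', p₁ a' ^ α) * (p₂ a b ^ α / ∑ b', p₂ a b' ^ α)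
      = (p₁ a * p₂ a b) ^ α / ∑ a', ∑ b', (p₁ a' * p₂ a' b') ^ α)
    {a : ι} (ha : 0 < p₁ a) :
    ∑ b, p₂ a b ^ α = (∑ a', ∑ b', (p₁ a' * p₂ a' b') ^ α) / ∑ a', p₁ a' ^ α := by
  set Z := ∑ a', ∑ b', (p₁ a' * p₂ a' b') ^ α
  have hpow : 0 < p₁ a ^ α := Real.rpow_pos_of_pos ha α
  have hZ₁ : 0 < ∑ a', p₁ a' ^ α :=
    lt_of_lt_of_le hpow <| single_le_sum (fun a' _ => Real.rpow_nonneg (hp₁ a') α) (mem_univ a)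
  have hmarginal : p₁ a ^ α / ∑ a', p₁ a' ^ α = p₁ a ^ α * (∑ b, p₂ a b ^ α) / Z := by
    have hsum := sum_congr rfl fun b (_ : b ∈ univ) => h a b
    rwa [← mul_sum, ← sum_div, div_self (hZ₂ a), mul_one, ← sum_div,
      sum_congr rfl fun b _ => Real.mul_rpow (hp₁ a) (hp₂ a b), ← mul_sum] at hsum
  have hZ : Z ≠ 0 := by
    rintro hZ
    rw [hZ, div_zero] at hmarginal
    exact (div_pos hpow hZ₁).ne' hmarginal
  field_simp at hmarginal ⊢
  linarith

/-- Token-level temperature does not equal the sequence-level power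
distribution: there exist an autoregressive model on a binary alphabet with horizon 2 and
`α > 1` such that the joint of the per-token power-tempered conditionals differs from the
normalized power distribution of the joint. -/
theorem tokenwise_temperature_ne_power_distribution :
    ∃ (p₁ : Fin 2 → ℝ) (p₂ : Fin 2 → Fin 2 → ℝ) (α : ℝ),
      (∀ a, 0 ≤ p₁ a) ∧ (∑ a, p₁ a = 1) ∧
      (∀ a b, 0 ≤ p₂ a b) ∧ (∀ a, ∑ b, p₂ a b = 1) ∧
      1 < α ∧
      ¬ (∀ a b, (p₁ a ^ α / ∑ a', p₁ a' ^ α) * (p₂ a b ^ α / ∑ b', p₂ a b' ^ α)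
            = (p₁ a * p₂ a b) ^ α / ∑ a', ∑ b', (p₁ a' * p₂ a' b') ^ α) := by
  set p₁ : Fin 2 → ℝ := ![1 / 2, 1 / 2]
  set p₂ : Fin 2 → Fin 2 → ℝ := ![![1 / 2, 1 / 2], ![1, 0]]
  have hp₁ : ∀ a, 0 ≤ p₁ a := by intro a; fin_cases a <;> norm_num [p₁]
  have hp₂ : ∀ a b, 0 ≤ p₂ a b := by intro a b; fin_cases a <;> fin_cases b <;> norm_num [p₂]
  have hZ₂ : ∀ a, ∑ b, p₂ a b ^ (2 : ℝ) ≠ 0 := by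
    intro a; fin_cases a <;> norm_num [p₂, Fin.sum_univ_two]
  refine ⟨p₁, p₂, 2, hp₁, by norm_num [p₁, Fin.sum_univ_two], hp₂,
    fun a => by fin_cases a <;> norm_num [p₂, Fin.sum_univ_two], by norm_num, fun h => ?_⟩
  have hsame := (sum_rpow_eq_of_tokenwise_eq_power hp₁ hp₂ hZ₂ h (a := 0) (by norm_num [p₁])).trans
    (sum_rpow_eq_of_tokenwise_eq_power hp₁ hp₂ hZ₂ h (a := 1) (by norm_num [p₁])).symm
  norm_num [p₂, Fin.sum_univ_two] at hsame
end

section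
/- Systematic resampling is unbiased: given normalized weights w_1,…,w_N summing to 1 and u_0 uniform on (0,1), with positions p_i = (u_0 + i − 1)/N and ancestor counts C_j = #{i : Σ_{k<j} w_k < p_i ≤ Σ_{k≤j} w_k}, the expected number of copies of particle j satisfies E[C_j] = N·w_j. -/
open Finset MeasureTheory Classical

lemma clamp_key (A B x : ℝ) (hAB : A ≤ B) :
    max (min 1 (B - x) - max 0 (A - x)) 0
      = min B (max A (x + 1)) - min B (max A x) := by
  simp only [max_def, min_def]
  split_ifs <;> linarith

lemma vol_Ioc_inter_Ioo (α β : ℝ) :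
    (volume (Set.Ioo (0:ℝ) 1 ∩ Set.Ioc α β)).toReal
      = max (min 1 β - max 0 α) 0 := by
  have h1 : volume (Set.Ioo (0:ℝ) 1 ∩ Set.Ioc α β)
      = volume (Set.Ioc (0:ℝ) 1 ∩ Set.Ioc α β) := by
    apply le_antisymm
    · exact measure_mono (Set.inter_subset_inter_left _ Set.Ioo_subset_Ioc_self)
    · calc volume (Set.Ioc (0:ℝ) 1 ∩ Set.Ioc α β)
          ≤ volume ((Set.Ioo (0:ℝ) 1 ∩ Set.Ioc α β) ∪ {1}) := by
            apply measure_mono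
            rintro x ⟨⟨hx0, hx1⟩, hx⟩
            rcases eq_or_lt_of_le hx1 with h | h
            · exact Or.inr h
            · exact Or.inl ⟨⟨hx0, h⟩, hx⟩
        _ ≤ volume (Set.Ioo (0:ℝ) 1 ∩ Set.Ioc α β) + volume ({1} : Set ℝ) :=
            measure_union_le _ _
        _ = volume (Set.Ioo (0:ℝ) 1 ∩ Set.Ioc α β) := by
            simp
  rw [h1, Set.Ioc_inter_Ioc, Real.volume_Ioc]
  rcases le_total (min 1 β - max 0 α) 0 with h | h
  · rw [ENNReal.ofReal_eq_zero.2 (by linarith), max_eq_right h]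
    simp
  · rw [ENNReal.toReal_ofReal (by linarith), max_eq_left h]

lemma main_calc (N : ℕ) (hN : 1 ≤ N) (A B : ℝ) (hA : 0 ≤ A) (hAB : A ≤ B) (hB : B ≤ 1) :
    (∫ u in Set.Ioo (0 : ℝ) 1,
      (((Finset.Icc 1 N).filter (fun i =>
          A < (u + (i : ℝ) - 1) / N ∧ (u + (i : ℝ) - 1) / N ≤ B)).card : ℝ))
      = (N : ℝ) * (B - A) := by
  have hN0 : (0:ℝ) < N := by exact_mod_cast hN
  have hpt : ∀ u : ℝ,
      (((Finset.Icc 1 N).filter (fun i =>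
          A < (u + (i : ℝ) - 1) / N ∧ (u + (i : ℝ) - 1) / N ≤ B)).card : ℝ)
      = ∑ i ∈ Finset.Icc 1 N,
          (Set.Ioc ((N:ℝ)*A - i + 1) ((N:ℝ)*B - i + 1)).indicator
            (fun _ => (1:ℝ)) u := by
    intro u
    rw [show (do let a ← Finset.Icc 1 N; pure ((a : ℕ) : ℝ))
        = (Finset.Icc 1 N).image (fun a : ℕ => (a : ℝ)) from by ext x; simp,
      Finset.filter_image,
      Finset.card_image_of_injective _ (fun a b h => by exact_mod_cast h),
      Finset.card_filter, Nat.cast_sum]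
    refine Finset.sum_congr rfl fun i _ => ?_
    rw [Nat.cast_ite, Nat.cast_one, Nat.cast_zero]
    have hiff : (A < (u + (i:ℝ) - 1) / N ∧ (u + (i:ℝ) - 1) / N ≤ B)
        ↔ u ∈ Set.Ioc ((N:ℝ)*A - i + 1) ((N:ℝ)*B - i + 1) := by
      rw [Set.mem_Ioc]
      constructor
      · rintro ⟨h1, h2⟩
        rw [lt_div_iff₀ hN0] at h1
        rw [div_le_iff₀ hN0] at h2
        constructor <;> nlinarith
      · rintro ⟨h1, h2⟩
        constructor
        · rw [lt_div_iff₀ hN0]; nlinarith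
        · rw [div_le_iff₀ hN0]; nlinarith
    rw [Set.indicator_apply]
    simp only [hiff]
  simp only [hpt]
  rw [MeasureTheory.integral_finset_sum]
  · have hterm : ∀ i ∈ Finset.Icc 1 N,
        (∫ u in Set.Ioo (0:ℝ) 1,
          (Set.Ioc ((N:ℝ)*A - i + 1) ((N:ℝ)*B - i + 1)).indicator
            (fun _ => (1:ℝ)) u)
        = min ((N:ℝ)*B) (max ((N:ℝ)*A) (((i:ℝ) - 1) + 1))
          - min ((N:ℝ)*B) (max ((N:ℝ)*A) ((i:ℝ) - 1)) := by
      intro i _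
      rw [MeasureTheory.setIntegral_indicator measurableSet_Ioc,
        MeasureTheory.setIntegral_const]
      rw [smul_eq_mul, mul_one, MeasureTheory.measureReal_def, vol_Ioc_inter_Ioo]
      have h1 : (N:ℝ)*B - i + 1 = (N:ℝ)*B - ((i:ℝ) - 1) := by ring
      have h2 : (N:ℝ)*A - i + 1 = (N:ℝ)*A - ((i:ℝ) - 1) := by ring
      rw [h1, h2, clamp_key _ _ _ (by nlinarith)]
    rw [Finset.sum_congr rfl hterm]
    have hreidx : ∑ i ∈ Finset.Icc 1 N,
        (min ((N:ℝ)*B) (max ((N:ℝ)*A) (((i:ℝ) - 1) + 1))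
          - min ((N:ℝ)*B) (max ((N:ℝ)*A) ((i:ℝ) - 1)))
        = ∑ k ∈ Finset.range N,
        ((fun k : ℕ => min ((N:ℝ)*B) (max ((N:ℝ)*A) (k:ℝ))) (k+1)
          - (fun k : ℕ => min ((N:ℝ)*B) (max ((N:ℝ)*A) (k:ℝ))) k) := by
      rw [← Finset.Ico_add_one_right_eq_Icc, Finset.sum_Ico_eq_sum_range]
      refine Finset.sum_congr (by norm_num) fun k _ => ?_
      push_cast
      ring_nf
    rw [hreidx, Finset.sum_range_sub (fun k : ℕ => min ((N:ℝ)*B) (max ((N:ℝ)*A) (k:ℝ)))]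
    have hBN : (N:ℝ)*B ≤ N := by nlinarith
    have hAB' : (N:ℝ)*A ≤ (N:ℝ)*B := by nlinarith
    have hA0 : 0 ≤ (N:ℝ)*A := by positivity
    rw [Nat.cast_zero, max_eq_left hA0, min_eq_right hAB',
      max_eq_right (le_trans hAB' hBN), min_eq_left hBN]
    ring
  · intro i _
    rw [MeasureTheory.integrable_indicator_iff measurableSet_Ioc]
    refine MeasureTheory.integrableOn_const (ne_of_lt ?_)
    rw [MeasureTheory.Measure.restrict_apply measurableSet_Ioc]
    refine lt_of_le_of_lt (measure_mono Set.inter_subset_right) ?_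
    simp [Real.volume_Ioo]

/-- Systematic resampling is unbiased: with normalized weights `w 1, …, w N`
summing to 1, offset `u₀` uniform on `(0,1)`, positions `pᵢ = (u₀ + i − 1)/N`, and ancestor
counts `C_j = #{i : S_{j−1} < pᵢ ≤ S_j}` (with `S_j = ∑_{k ≤ j} w k`), the expected number of
copies of particle `j` satisfies `E[C_j] = N · w j`. -/
theorem systematic_resampling_unbiased
    (N : ℕ) (hN : 1 ≤ N)
    (w : ℕ → ℝ) (hw : ∀ j, 0 ≤ w j) (hsum : ∑ j ∈ Finset.Icc 1 N, w j = 1) :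
    ∀ j ∈ Finset.Icc 1 N,
      (∫ u in Set.Ioo (0 : ℝ) 1,
        (((Finset.Icc 1 N).filter (fun i =>
            (∑ k ∈ Finset.Icc 1 (j - 1), w k) < (u + (i : ℝ) - 1) / N ∧
            (u + (i : ℝ) - 1) / N ≤ ∑ k ∈ Finset.Icc 1 j, w k)).card : ℝ))
        = (N : ℝ) * w j := by
  intro j hj
  rw [Finset.mem_Icc] at hj
  obtain ⟨hj1, hjN⟩ := hj
  have hA : 0 ≤ ∑ k ∈ Finset.Icc 1 (j - 1), w k :=
    Finset.sum_nonneg fun k _ => hw k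
  have hj' : j - 1 + 1 = j := by omega
  have hBA : ∑ k ∈ Finset.Icc 1 j, w k
      = (∑ k ∈ Finset.Icc 1 (j - 1), w k) + w j := by
    conv_lhs => rw [← hj']
    rw [Finset.sum_Icc_succ_top (by omega : 1 ≤ j - 1 + 1), hj']
  have hB1 : ∑ k ∈ Finset.Icc 1 j, w k ≤ 1 := by
    rw [← hsum]
    exact Finset.sum_le_sum_of_subset_of_nonneg
      (Finset.Icc_subset_Icc_right hjN) (fun k _ _ => hw k)
  have := main_calc N hN (∑ k ∈ Finset.Icc 1 (j - 1), w k)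
    (∑ k ∈ Finset.Icc 1 j, w k) hA (by rw [hBA]; linarith [hw j]) hB1
  rw [this, hBA]
  ring
end
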